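/- Soundness and completeness of the MIC-extraction encoding: Let (V,E,σ) be an influence graph with a designated set of input vertices and μ : V → {+,−} a partial vertex labeling. Then a subset W ⊆ V is a Minimal Inconsistent Core if and only if there is an answer set X of the disjunctive logic program P_D ∪ τ((V,E,σ),μ) such that { i ∈ V | active(i) ∈ X } = W. -/

import Mathlib

/-!
Completeness: given a MIC `W` and, for each `w ∈ W`, labelings witnessing `W \ {w}`, take the
atoms in which `bottom` and all unprimed labels hold and the `w`-th primed copy of the labels is
the witness for `W \ {w}`. This is a model of its reduct, and a minimal one: a smaller model must
still contain `bottom`, since otherwise its unprimed labels, which must agree along some edge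
without `opposite` into each active vertex, would witness `W`.

Soundness: let `X` be an answer set with active atoms `W`. A labeling witnessing `W` would let us
remove `bottom`, the labels disagreeing with it and the `opposite` atoms of the edges it satisfies
from `X` and keep a model of the reduct. Answer sets are supported, so each primed copy of the
labels is unique, and the constraint on `receive'` makes the copy of an active `w` a witness for
`W \ {w}`.
-/

/-- Sign multiplication: `true` stands for `+` and `false` for `−`
(`+·+ = −·− = +`, `+·− = −·+ = −`). -/
def signMul (a b : Bool) : Bool := a == b

/-- `σ'` and `μ'` are witnessing labelings for `W` in the influence graph with
vertex type `V`, edges `E`, partial edge labeling `σ`, partial vertex labeling `μ`,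
and input vertices `I`: they are total, extend `σ` and `μ`, and for every
non-input vertex `i ∈ W` there is an edge `(j, i) ∈ E` with
`μ' i = μ' j · σ' (j, i)`. -/
def Witnessing {V : Type} (E : Set (V × V)) (σ : V × V → Option Bool)
    (μ : V → Option Bool) (I : Set V) (W : Set V)
    (σ' : V × V → Bool) (μ' : V → Bool) : Prop :=
  (∀ e s, σ e = some s → σ' e = s) ∧
  (∀ i s, μ i = some s → μ' i = s) ∧
  (∀ i ∈ W, i ∉ I → ∃ j, (j, i) ∈ E ∧ μ' i = signMul (μ' j) (σ' (j, i)))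

/-- The influence graph `(V, E, σ)` with inputs `I` and the partial vertex
labeling `μ` are consistent: there are witnessing labelings for all of `V`. -/
def Consistent {V : Type} (E : Set (V × V)) (σ : V × V → Option Bool)
    (μ : V → Option Bool) (I : Set V) : Prop :=
  ∃ σ' μ', Witnessing E σ μ I Set.univ σ' μ'

/-- `W` is a Minimal Inconsistent Core: there are no witnessing labelings for `W`,
but every proper subset of `W` has witnessing labelings. -/
def IsMIC {V : Type} (E : Set (V × V)) (σ : V × V → Option Bool)
    (μ : V → Option Bool) (I : Set V) (W : Set V) : Prop :=
  (¬ ∃ σ' μ', Witnessing E σ μ I W σ' μ') ∧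
  (∀ W', W' ⊂ W → ∃ σ' μ', Witnessing E σ μ I W' σ' μ')

/-- A disjunctive rule `(H, B⁺, B⁻)` over atoms `A`. -/
structure Rule (A : Type) where
  head : Set A
  pos : Set A
  neg : Set A

/-- `X` satisfies a rule: if `B⁺ ⊆ X` and `B⁻ ∩ X = ∅` then `H ∩ X ≠ ∅`. -/
def RuleSat {A : Type} (X : Set A) (r : Rule A) : Prop :=
  r.pos ⊆ X → r.neg ∩ X = ∅ → (r.head ∩ X).Nonempty

/-- The reduct of a program `P` relative to `X`. -/
def reduct {A : Type} (P : Set (Rule A)) (X : Set A) : Set (Rule A) :=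
  {r' | ∃ r ∈ P, r.neg ∩ X = ∅ ∧ r' = ⟨r.head, r.pos, ∅⟩}

/-- `X` is an answer set of `P`: `X` is a `⊆`-minimal set of atoms satisfying
every rule of the reduct `P^X`. -/
def IsAnswerSet {A : Type} (P : Set (Rule A)) (X : Set A) : Prop :=
  (∀ r ∈ reduct P X, RuleSat X r) ∧
  ∀ Y, Y ⊆ X → (∀ r ∈ reduct P X, RuleSat Y r) → Y = X

/-- A fact: a rule with a singleton head and empty body. -/
def fact {A : Type} (a : A) : Rule A := ⟨{a}, ∅, ∅⟩

/-- Ground atoms of the MIC-extraction encoding. -/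
inductive AtomD (V : Type) : Type
  | vertex : V → AtomD V
  | edge : V → V → AtomD V
  | observedE : V → V → Bool → AtomD V
  | observedV : V → Bool → AtomD V
  | input : V → AtomD V
  | labelV : V → Bool → AtomD V
  | labelE : V → V → Bool → AtomD V
  | active : V → AtomD V
  | inactive : V → AtomD V
  | edgeMIC : V → V → AtomD V
  | vertexMIC : V → AtomD V
  | opposite : V → V → AtomD V
  | bottom : AtomD V
  | labelV' : V → V → Bool → AtomD V
  | labelE' : V → V → V → Bool → AtomD V
  | receive' : V → V → Bool → AtomD V

/-- The instance translation `τ((V,E,σ),μ)`: facts describing the influence graph,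
the partial labelings, and the input vertices. -/
def tauD {V : Type} (E : Set (V × V)) (σ : V × V → Option Bool)
    (μ : V → Option Bool) (I : Set V) : Set (Rule (AtomD V)) :=
  {r | (∃ i : V, r = fact (AtomD.vertex i)) ∨
       (∃ j i, (j, i) ∈ E ∧ r = fact (AtomD.edge j i)) ∨
       (∃ j i s, (j, i) ∈ E ∧ σ (j, i) = some s ∧ r = fact (AtomD.observedE j i s)) ∨
       (∃ i s, μ i = some s ∧ r = fact (AtomD.observedV i s)) ∨
       (∃ i ∈ I, r = fact (AtomD.input i))}

/-- The MIC-extraction program `P_D` (ground instantiation over all vertices,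
edges, and signs). -/
def PD {V : Type} (E : Set (V × V)) : Set (Rule (AtomD V)) :=
  {r | (∃ v s, r = ⟨{AtomD.labelV v s}, {AtomD.observedV v s}, ∅⟩) ∨
       (∃ u v s, (u, v) ∈ E ∧ r = ⟨{AtomD.labelE u v s}, {AtomD.observedE u v s}, ∅⟩) ∨
       (∃ v : V, r = ⟨{AtomD.active v, AtomD.inactive v},
          {AtomD.vertex v}, {AtomD.input v}⟩) ∨
       (∃ u v, (u, v) ∈ E ∧ r = ⟨{AtomD.edgeMIC u v},
          {AtomD.edge u v, AtomD.active v}, ∅⟩) ∨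
       (∃ u v, (u, v) ∈ E ∧ r = ⟨{AtomD.vertexMIC u}, {AtomD.edgeMIC u v}, ∅⟩) ∨
       (∃ v : V, r = ⟨{AtomD.vertexMIC v}, {AtomD.active v}, ∅⟩) ∨
       (∃ v : V, r = ⟨{AtomD.labelV v true, AtomD.labelV v false},
          {AtomD.vertexMIC v}, ∅⟩) ∨
       (∃ u v, (u, v) ∈ E ∧ r = ⟨{AtomD.labelE u v true, AtomD.labelE u v false},
          {AtomD.edgeMIC u v}, ∅⟩) ∨
       (∃ u v s, (u, v) ∈ E ∧ r = ⟨{AtomD.opposite u v},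
          {AtomD.labelE u v false, AtomD.labelV u s, AtomD.labelV v s}, ∅⟩) ∨
       (∃ u v s t, (u, v) ∈ E ∧ s ≠ t ∧ r = ⟨{AtomD.opposite u v},
          {AtomD.labelE u v true, AtomD.labelV u s, AtomD.labelV v t}, ∅⟩) ∨
       (∃ v : V, r = ⟨{AtomD.bottom},
          insert (AtomD.active v) {a | ∃ u, (u, v) ∈ E ∧ a = AtomD.opposite u v}, ∅⟩) ∨
       (r = ⟨∅, ∅, {AtomD.bottom}⟩) ∨
       (∃ v s, r = ⟨{AtomD.labelV v s}, {AtomD.bottom, AtomD.vertex v}, ∅⟩) ∨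
       (∃ u v s, (u, v) ∈ E ∧ r = ⟨{AtomD.labelE u v s},
          {AtomD.bottom, AtomD.edge u v}, ∅⟩) ∨
       (∃ w v : V, r = ⟨{AtomD.labelV' w v true, AtomD.labelV' w v false},
          {AtomD.active w, AtomD.vertexMIC v}, ∅⟩) ∨
       (∃ w u v, (u, v) ∈ E ∧ r = ⟨{AtomD.labelE' w u v true, AtomD.labelE' w u v false},
          {AtomD.active w, AtomD.edgeMIC u v}, ∅⟩) ∨
       (∃ w v s, r = ⟨{AtomD.labelV' w v s}, {AtomD.active w, AtomD.observedV v s}, ∅⟩) ∨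
       (∃ w u v s, (u, v) ∈ E ∧ r = ⟨{AtomD.labelE' w u v s},
          {AtomD.active w, AtomD.observedE u v s}, ∅⟩) ∨
       (∃ w u v s, (u, v) ∈ E ∧ v ≠ w ∧ r = ⟨{AtomD.receive' w v true},
          {AtomD.labelE' w u v s, AtomD.labelV' w u s}, ∅⟩) ∨
       (∃ w u v s t, (u, v) ∈ E ∧ v ≠ w ∧ s ≠ t ∧ r = ⟨{AtomD.receive' w v false},
          {AtomD.labelE' w u v s, AtomD.labelV' w u t}, ∅⟩) ∨
       (∃ w v s, v ≠ w ∧ r = ⟨∅, {AtomD.labelV' w v s, AtomD.active v},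
          {AtomD.receive' w v s}⟩)}

open AtomD

section Signs

theorem signMul_self (s : Bool) : signMul s s = true := by
  cases s <;> rfl

theorem signMul_of_ne {s t : Bool} (h : s ≠ t) : signMul s t = false := by
  cases s <;> cases t <;> simp_all [signMul]

theorem signMul_right_cancel {a b e : Bool} (h : signMul a e = signMul b e) : a = b := by
  cases a <;> cases b <;> cases e <;> simp_all [signMul]

theorem signMul_left_cancel {a e₁ e₂ : Bool} (h : signMul a e₁ = signMul a e₂) :
    e₁ = e₂ := by
  cases a <;> cases e₁ <;> cases e₂ <;> simp_all [signMul]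

theorem Bool.eq_of_forall_ne_some_imp_not {o : Option Bool} {p : Bool → Prop}
    (hp : ∀ s, o ≠ some s → p s → ¬ p (!s)) {s t : Bool} (hs : p s) (ht : p t) :
    s = t := by
  by_contra hst
  obtain rfl : t = !s := by cases s <;> cases t <;> simp_all
  by_cases ho : o = some s
  · exact hp (!s) (by simp [ho]) ht (by simpa using hs)
  · exact hp s ho hs ht

theorem Option.getD_decide_eq_of_unique {o : Option Bool} {p : Bool → Prop} [DecidablePred p]
    {s : Bool} (hs : p s) (hunique : ∀ t, p t → t = s) (ho : ∀ b, o = some b → p b) :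
    o.getD (decide (p true)) = s := by
  cases o with
  | some b => exact hunique b (ho b rfl)
  | none =>
    cases s
    · simpa using fun h => Bool.noConfusion (hunique true h)
    · simpa using hs

end Signs

section Witnessing

variable {V : Type} {E : Set (V × V)} {σ : V × V → Option Bool} {μ : V → Option Bool}
  {I W W' : Set V} {σ' : V × V → Bool} {μ' : V → Bool}

theorem Witnessing.mono (h : Witnessing E σ μ I W σ' μ') (hW : W' ⊆ W) :
    Witnessing E σ μ I W' σ' μ' :=
  ⟨h.1, h.2.1, fun i hi => h.2.2 i (hW hi)⟩

theorem Witnessing.of_sdiff_input {v : V} (h : Witnessing E σ μ I (W \ {v}) σ' μ')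
    (hv : v ∈ I) : Witnessing E σ μ I W σ' μ' :=
  ⟨h.1, h.2.1, fun i hi hiI => h.2.2 i ⟨hi, fun hiv => hiI (hiv ▸ hv)⟩ hiI⟩

theorem IsMIC.not_mem_input (hW : IsMIC E σ μ I W) {v : V} (hv : v ∈ W) : v ∉ I := fun hvI =>
  have ⟨σ', μ', h⟩ := hW.2 (W \ {v}) (Set.sdiff_singleton_ssubset.mpr hv)
  hW.1 ⟨σ', μ', h.of_sdiff_input hvI⟩

theorem IsMIC.exists_witnessing_sdiff (hW : IsMIC E σ μ I W) :
    ∃ (σw : V → V × V → Bool) (μw : V → V → Bool),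
      ∀ w ∈ W, Witnessing E σ μ I (W \ {w}) (σw w) (μw w) := by
  choose! σw μw h using fun w (hw : w ∈ W) =>
    hW.2 (W \ {w}) (Set.sdiff_singleton_ssubset.mpr hw)
  exact ⟨σw, μw, h⟩

end Witnessing

section AnswerSet

variable {A : Type} {P : Set (Rule A)} {X Y : Set A}

theorem forall_mem_reduct_ruleSat_iff :
    (∀ r ∈ reduct P X, RuleSat Y r) ↔
      ∀ r ∈ P, r.neg ∩ X = ∅ → r.pos ⊆ Y → (r.head ∩ Y).Nonempty := by
  constructor
  · intro h r hr hneg hpos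
    exact h ⟨r.head, r.pos, ∅⟩ ⟨r, hr, hneg, rfl⟩ hpos (Set.empty_inter Y)
  · rintro h _ ⟨r, hr, hneg, rfl⟩ hpos -
    exact h r hr hneg hpos

/-- Otherwise removing `a` from `X` would leave a smaller model of the reduct. -/
theorem IsAnswerSet.exists_support (hX : IsAnswerSet P X) {a : A} (ha : a ∈ X) :
    ∃ r ∈ P, r.neg ∩ X = ∅ ∧ r.pos ⊆ X ∧ a ∈ r.head ∧ r.head ∩ X ⊆ {a} := by
  by_contra! hunsupported
  have hmodel : ∀ r ∈ reduct P X, RuleSat (X \ {a}) r := by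
    rw [forall_mem_reduct_ruleSat_iff]
    intro r hr hneg hpos
    have hposX : r.pos ⊆ X := hpos.trans Set.sdiff_subset
    obtain ⟨b, hbr, hbX⟩ := forall_mem_reduct_ruleSat_iff.mp hX.1 r hr hneg hposX
    by_cases har : a ∈ r.head
    · obtain ⟨c, hc, hca⟩ := Set.not_subset.mp (hunsupported r hr hneg hposX har)
      exact ⟨c, hc.1, hc.2, hca⟩
    · exact ⟨b, hbr, hbX, fun hba => har (Set.mem_singleton_iff.mp hba ▸ hbr)⟩
  have hXa : X \ {a} = X := hX.2 _ Set.sdiff_subset hmodel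
  exact (hXa.symm ▸ ha : a ∈ X \ {a}).2 rfl

end AnswerSet

section ReductModel

variable {V : Type} (E : Set (V × V)) (σ : V × V → Option Bool) (μ : V → Option Bool)
  (I : Set V)

/-- `Y` is a model of the reduct of `P_D ∪ τ((V,E,σ),μ)` relative to `X`, one field per
rule. -/
structure ReductModel (X Y : Set (AtomD V)) : Prop where
  labelV_of_observedV : ∀ v s, observedV v s ∈ Y → labelV v s ∈ Y
  labelE_of_observedE : ∀ u v s, (u, v) ∈ E → observedE u v s ∈ Y → labelE u v s ∈ Y
  active_or_inactive : ∀ v, input v ∉ X → vertex v ∈ Y →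
    active v ∈ Y ∨ inactive v ∈ Y
  edgeMIC_mem : ∀ u v, (u, v) ∈ E → edge u v ∈ Y → active v ∈ Y → edgeMIC u v ∈ Y
  vertexMIC_of_edgeMIC : ∀ u v, (u, v) ∈ E → edgeMIC u v ∈ Y → vertexMIC u ∈ Y
  vertexMIC_of_active : ∀ v, active v ∈ Y → vertexMIC v ∈ Y
  labelV_choice : ∀ v, vertexMIC v ∈ Y → labelV v true ∈ Y ∨ labelV v false ∈ Y
  labelE_choice : ∀ u v, (u, v) ∈ E → edgeMIC u v ∈ Y →
    labelE u v true ∈ Y ∨ labelE u v false ∈ Y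
  opposite_of_negative : ∀ u v s, (u, v) ∈ E →
    labelE u v false ∈ Y → labelV u s ∈ Y → labelV v s ∈ Y → opposite u v ∈ Y
  opposite_of_positive : ∀ u v s t, (u, v) ∈ E → s ≠ t →
    labelE u v true ∈ Y → labelV u s ∈ Y → labelV v t ∈ Y → opposite u v ∈ Y
  bottom_of_opposite : ∀ v, active v ∈ Y → (∀ u, (u, v) ∈ E → opposite u v ∈ Y) →
    bottom ∈ Y
  bottom_mem : bottom ∈ X
  labelV_of_bottom : ∀ v s, bottom ∈ Y → vertex v ∈ Y → labelV v s ∈ Y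
  labelE_of_bottom : ∀ u v s, (u, v) ∈ E → bottom ∈ Y → edge u v ∈ Y →
    labelE u v s ∈ Y
  labelV'_choice : ∀ w v, active w ∈ Y → vertexMIC v ∈ Y →
    labelV' w v true ∈ Y ∨ labelV' w v false ∈ Y
  labelE'_choice : ∀ w u v, (u, v) ∈ E → active w ∈ Y → edgeMIC u v ∈ Y →
    labelE' w u v true ∈ Y ∨ labelE' w u v false ∈ Y
  labelV'_of_observedV : ∀ w v s, active w ∈ Y → observedV v s ∈ Y → labelV' w v s ∈ Y
  labelE'_of_observedE : ∀ w u v s, (u, v) ∈ E → active w ∈ Y → observedE u v s ∈ Y →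
    labelE' w u v s ∈ Y
  receive'_of_positive : ∀ w u v s, (u, v) ∈ E → v ≠ w →
    labelE' w u v s ∈ Y → labelV' w u s ∈ Y → receive' w v true ∈ Y
  receive'_of_negative : ∀ w u v s t, (u, v) ∈ E → v ≠ w → s ≠ t →
    labelE' w u v s ∈ Y → labelV' w u t ∈ Y → receive' w v false ∈ Y
  receive'_of_labelV' : ∀ w v s, v ≠ w → labelV' w v s ∈ Y → active v ∈ Y →
    receive' w v s ∈ X
  vertex_mem : ∀ v, vertex v ∈ Y
  edge_mem : ∀ u v, (u, v) ∈ E → edge u v ∈ Y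
  observedE_mem : ∀ u v s, (u, v) ∈ E → σ (u, v) = some s → observedE u v s ∈ Y
  observedV_mem : ∀ v s, μ v = some s → observedV v s ∈ Y
  input_mem : ∀ v ∈ I, input v ∈ Y

variable {E σ μ I} {X Y : Set (AtomD V)}

theorem reductModel_iff :
    (∀ r ∈ reduct (PD E ∪ tauD E σ μ I) X, RuleSat Y r) ↔ ReductModel E σ μ I X Y := by
  rw [forall_mem_reduct_ruleSat_iff]
  simp only [PD, tauD, fact, Set.mem_union, Set.mem_ofPred_eq, or_imp, forall_and,
    forall_exists_index, and_imp, @forall_comm (Rule (AtomD V)), @forall_comm (AtomD V),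
    forall_eq, Set.insert_subset_iff, Set.singleton_subset_iff, Set.empty_subset,
    Set.ofPred_subset, Set.inter_nonempty, Set.mem_insert_iff, Set.mem_singleton_iff,
    exists_eq_or_imp, exists_eq_left, Set.singleton_inter_eq_empty, Set.empty_inter,
    true_implies, Set.mem_empty_iff_false, false_and, exists_false, not_true_eq_false,
    imp_false, not_not]
  constructor
  · rintro ⟨⟨h₁, h₂, h₃, h₄, h₅, h₆, h₇, h₈, h₉, h₁₀, h₁₁, h₁₂, h₁₃, h₁₄, h₁₅, h₁₆, h₁₇,
      h₁₈, h₁₉, h₂₀, h₂₁⟩, f₁, f₂, f₃, f₄, f₅⟩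
    exact ⟨h₁, h₂, h₃, h₄, h₅, h₆, h₇, h₈, h₉, h₁₀, h₁₁, h₁₂, h₁₃, h₁₄, h₁₅, h₁₆, h₁₇, h₁₈,
      h₁₉, h₂₀, fun w v s hvw hl ha => by_contra fun hr => h₂₁ w v s hvw hr ⟨hl, ha⟩,
      f₁, f₂, f₃, f₄, f₅⟩
  · intro h
    exact ⟨⟨h.1, h.2, h.3, h.4, h.5, h.6, h.7, h.8, h.9, h.10, h.11, h.12, h.13, h.14, h.15,
      h.16, h.17, h.18, h.19, h.20, fun w v s hvw hr hla => hr (h.21 w v s hvw hla.1 hla.2)⟩,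
      h.22, h.23, h.24, h.25, h.26⟩

namespace ReductModel

variable (h : ReductModel E σ μ I X Y)
include h

theorem labelV_mem_of_bottom_mem (hb : bottom ∈ Y) (v : V) (s : Bool) : labelV v s ∈ Y :=
  h.labelV_of_bottom v s hb (h.vertex_mem v)

theorem labelE_mem_of_bottom_mem (hb : bottom ∈ Y) {u v : V} (hE : (u, v) ∈ E) (s : Bool) :
    labelE u v s ∈ Y :=
  h.labelE_of_bottom u v s hE hb (h.edge_mem u v hE)

theorem opposite_mem_of_bottom_mem (hb : bottom ∈ Y) {u v : V} (hE : (u, v) ∈ E) :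
    opposite u v ∈ Y :=
  h.opposite_of_negative u v true hE (h.labelE_mem_of_bottom_mem hb hE false)
    (h.labelV_mem_of_bottom_mem hb u true) (h.labelV_mem_of_bottom_mem hb v true)

theorem opposite_mem_of_ne {u v : V} {s t e : Bool} (hE : (u, v) ∈ E) (he : labelE u v e ∈ Y)
    (hs : labelV u s ∈ Y) (ht : labelV v t ∈ Y) (hne : t ≠ signMul s e) :
    opposite u v ∈ Y := by
  cases e
  · obtain rfl : t = s := by cases s <;> cases t <;> simp_all [signMul]
    exact h.opposite_of_negative u v t hE he hs ht
  · exact h.opposite_of_positive u v s t hE (by cases s <;> cases t <;> simp_all [signMul])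
      he hs ht

theorem receive'_signMul_mem {w u v : V} {t e : Bool} (hE : (u, v) ∈ E) (hvw : v ≠ w)
    (he : labelE' w u v e ∈ Y) (ht : labelV' w u t ∈ Y) : receive' w v (signMul t e) ∈ Y := by
  by_cases het : e = t
  · subst het
    rw [signMul_self]
    exact h.receive'_of_positive w u v e hE hvw he ht
  · rw [signMul_of_ne (Ne.symm het)]
    exact h.receive'_of_negative w u v e t hE hvw het he ht

/-- Without `bottom`, some edge into each active vertex lacks `opposite`, and the labels at its
ends are then forced to agree with it. -/
theorem witnessing_of_bottom_not_mem (hb : bottom ∉ Y) :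
    ∃ σ' μ', Witnessing E σ μ I {v | active v ∈ Y} σ' μ' := by
  classical
  refine ⟨fun e => (σ e).getD (decide (labelE e.1 e.2 true ∈ Y)),
    fun v => (μ v).getD (decide (labelV v true ∈ Y)),
    fun e s hs => by simp [hs], fun v s hs => by simp [hs], fun v hv _ => ?_⟩
  obtain ⟨u, hE, hopp⟩ : ∃ u, (u, v) ∈ E ∧ opposite u v ∉ Y := by
    by_contra! hall
    exact hb (h.bottom_of_opposite v hv hall)
  have hem := h.edgeMIC_mem u v hE (h.edge_mem u v hE) hv
  obtain ⟨t, ht⟩ : ∃ t, labelV v t ∈ Y :=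
    Bool.exists_bool.mpr (h.labelV_choice v (h.vertexMIC_of_active v hv)).symm
  obtain ⟨s, hs⟩ : ∃ s, labelV u s ∈ Y :=
    Bool.exists_bool.mpr (h.labelV_choice u (h.vertexMIC_of_edgeMIC u v hE hem)).symm
  obtain ⟨e, he⟩ : ∃ e, labelE u v e ∈ Y :=
    Bool.exists_bool.mpr (h.labelE_choice u v hE hem).symm
  have compat : ∀ s' t' e', labelV u s' ∈ Y → labelV v t' ∈ Y → labelE u v e' ∈ Y →
      t' = signMul s' e' := fun s' t' e' hs' ht' he' =>
    by_contra fun hne => hopp (h.opposite_mem_of_ne hE he' hs' ht' hne)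
  have hcompat := compat s t e hs ht he
  refine ⟨u, hE, ?_⟩
  dsimp only
  rw [Option.getD_decide_eq_of_unique ht
      (fun t' ht' => (compat s t' e hs ht' he).trans hcompat.symm)
      (fun b hb => h.labelV_of_observedV v b (h.observedV_mem v b hb)),
    Option.getD_decide_eq_of_unique hs
      (fun s' hs' => signMul_right_cancel ((compat s' t e hs' ht he).symm.trans hcompat))
      (fun b hb => h.labelV_of_observedV u b (h.observedV_mem u b hb)),
    Option.getD_decide_eq_of_unique he
      (fun e' he' => signMul_left_cancel ((compat s t e' hs ht he').symm.trans hcompat))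
      (fun b hb => h.labelE_of_observedE u v b hE (h.observedE_mem u v b hE hb))]
  exact hcompat

end ReductModel

end ReductModel

section Soundness

variable {V : Type} {E : Set (V × V)} {σ : V × V → Option Bool} {μ : V → Option Bool}
  {I : Set V} {X : Set (AtomD V)}

variable (E σ μ) in
/-- What a rule of `P_D ∪ τ` with `a` in its head reveals about `a` (recorded only for some
atoms). -/
def HeadInfo (r : Rule (AtomD V)) : AtomD V → Prop
  | observedV v s => μ v = some s
  | observedE u v s => σ (u, v) = some s
  | active v => input v ∈ r.neg
  | labelV' w v s => labelV' w v (!s) ∈ r.head ∨ observedV v s ∈ r.pos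
  | labelE' w u v s => labelE' w u v (!s) ∈ r.head ∨ observedE u v s ∈ r.pos
  | receive' w v s =>
    ∃ u t e, (u, v) ∈ E ∧ labelE' w u v e ∈ r.pos ∧ labelV' w u t ∈ r.pos ∧
      s = signMul t e
  | _ => True

theorem headInfo_of_mem_head {r : Rule (AtomD V)} (hr : r ∈ PD E ∪ tauD E σ μ I) {a : AtomD V}
    (ha : a ∈ r.head) : HeadInfo E σ μ r a := by
  revert r a
  simp only [PD, tauD, fact, Set.mem_union, Set.mem_ofPred_eq, or_imp, forall_and,
    forall_exists_index, and_imp, @forall_comm (Rule (AtomD V)), forall_eq,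
    Set.mem_insert_iff, Set.mem_singleton_iff]
  simp +contextual [HeadInfo, signMul]

def RespectsLabeling (σ' : V × V → Bool) (μ' : V → Bool) : AtomD V → Prop
  | bottom => False
  | labelV v s => μ' v = s
  | labelE u v s => σ' (u, v) = s
  | opposite u v => μ' v ≠ signMul (μ' u) (σ' (u, v))
  | _ => True

namespace IsAnswerSet

variable (hX : IsAnswerSet (PD E ∪ tauD E σ μ I) X)
include hX

theorem reductModel : ReductModel E σ μ I X X :=
  reductModel_iff.mp hX.1

theorem eq_of_reductModel {Y : Set (AtomD V)} (hYX : Y ⊆ X) (hY : ReductModel E σ μ I X Y) :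
    Y = X :=
  hX.2 Y hYX (reductModel_iff.mpr hY)

theorem exists_headInfo {a : AtomD V} (ha : a ∈ X) :
    ∃ r ∈ PD E ∪ tauD E σ μ I,
      r.neg ∩ X = ∅ ∧ r.pos ⊆ X ∧ r.head ∩ X ⊆ {a} ∧ HeadInfo E σ μ r a :=
  have ⟨r, hr, hneg, hpos, hhead, hsingle⟩ := hX.exists_support ha
  ⟨r, hr, hneg, hpos, hsingle, headInfo_of_mem_head hr hhead⟩

theorem eq_some_of_observedV_mem {v : V} {s : Bool} (h : observedV v s ∈ X) : μ v = some s :=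
  have ⟨_, _, _, _, _, hinfo⟩ := hX.exists_headInfo h
  hinfo

theorem eq_some_of_observedE_mem {u v : V} {s : Bool} (h : observedE u v s ∈ X) :
    σ (u, v) = some s :=
  have ⟨_, _, _, _, _, hinfo⟩ := hX.exists_headInfo h
  hinfo

theorem not_mem_input_of_active_mem {v : V} (h : active v ∈ X) : v ∉ I := fun hI =>
  have ⟨_, _, hneg, _, _, hinfo⟩ := hX.exists_headInfo h
  hneg.subset ⟨hinfo, hX.reductModel.input_mem v hI⟩

theorem exists_of_receive'_mem {w v : V} {s : Bool} (h : receive' w v s ∈ X) :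
    ∃ u t e, (u, v) ∈ E ∧ labelE' w u v e ∈ X ∧ labelV' w u t ∈ X ∧ s = signMul t e :=
  have ⟨_, _, _, hpos, _, u, t, e, hE, he, ht, hs⟩ := hX.exists_headInfo h
  ⟨u, t, e, hE, hpos he, hpos ht, hs⟩

/-- The only rules deriving `labelV' w v s` are the choice rule, whose other head atom is
`labelV' w v (!s)`, and the rule copying the observation `μ v = some s`. -/
theorem labelV'_eq {w v : V} {s t : Bool} (hs : labelV' w v s ∈ X) (ht : labelV' w v t ∈ X) :
    s = t := by
  refine Bool.eq_of_forall_ne_some_imp_not (o := μ v) (p := fun s => labelV' w v s ∈ X)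
    (fun s hμ hs hnot => ?_) hs ht
  obtain ⟨_, _, _, hpos, hsingle, hinfo⟩ := hX.exists_headInfo hs
  rcases hinfo with hhead | hobs
  · simpa using hsingle ⟨hhead, hnot⟩
  · exact hμ (hX.eq_some_of_observedV_mem (hpos hobs))

theorem labelE'_eq {w u v : V} {s t : Bool} (hs : labelE' w u v s ∈ X)
    (ht : labelE' w u v t ∈ X) : s = t := by
  refine Bool.eq_of_forall_ne_some_imp_not (o := σ (u, v)) (p := fun s => labelE' w u v s ∈ X)
    (fun s hσ hs hnot => ?_) hs ht
  obtain ⟨_, _, _, hpos, hsingle, hinfo⟩ := hX.exists_headInfo hs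
  rcases hinfo with hhead | hobs
  · simpa using hsingle ⟨hhead, hnot⟩
  · exact hσ (hX.eq_some_of_observedE_mem (hpos hobs))

theorem reductModel_respectsLabeling {σ' : V × V → Bool} {μ' : V → Bool}
    (hwit : Witnessing E σ μ I {v | active v ∈ X} σ' μ') :
    ReductModel E σ μ I X {a ∈ X | RespectsLabeling σ' μ' a} := by
  have M := hX.reductModel
  have hb := M.bottom_mem
  obtain ⟨hσ', hμ', hedges⟩ := hwit
  refine
    { labelV_of_observedV := fun v s ho =>
        ⟨M.labelV_of_observedV v s ho.1, hμ' v s (hX.eq_some_of_observedV_mem ho.1)⟩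
      labelE_of_observedE := fun u v s hE ho =>
        ⟨M.labelE_of_observedE u v s hE ho.1, hσ' _ s (hX.eq_some_of_observedE_mem ho.1)⟩
      active_or_inactive := fun v hin hv =>
        (M.active_or_inactive v hin hv.1).imp (⟨·, trivial⟩) (⟨·, trivial⟩)
      edgeMIC_mem := fun u v hE he ha => ⟨M.edgeMIC_mem u v hE he.1 ha.1, trivial⟩
      vertexMIC_of_edgeMIC := fun u v hE he => ⟨M.vertexMIC_of_edgeMIC u v hE he.1, trivial⟩
      vertexMIC_of_active := fun v ha => ⟨M.vertexMIC_of_active v ha.1, trivial⟩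
      labelV_choice := fun v _ => (Bool.eq_false_or_eq_true (μ' v)).imp
        (⟨M.labelV_mem_of_bottom_mem hb v true, ·⟩)
        (⟨M.labelV_mem_of_bottom_mem hb v false, ·⟩)
      labelE_choice := fun u v hE _ => (Bool.eq_false_or_eq_true (σ' (u, v))).imp
        (⟨M.labelE_mem_of_bottom_mem hb hE true, ·⟩)
        (⟨M.labelE_mem_of_bottom_mem hb hE false, ·⟩)
      opposite_of_negative := fun u v s hE he hu hv =>
        ⟨M.opposite_of_negative u v s hE he.1 hu.1 hv.1, by
          cases s <;> simp_all [RespectsLabeling, signMul]⟩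
      opposite_of_positive := fun u v s t hE hst he hu hv =>
        ⟨M.opposite_of_positive u v s t hE hst he.1 hu.1 hv.1, by
          cases s <;> cases t <;> simp_all [RespectsLabeling, signMul]⟩
      bottom_of_opposite := fun v hv hopp =>
        have ⟨j, hjE, hj⟩ := hedges v hv.1 (hX.not_mem_input_of_active_mem hv.1)
        ((hopp j hjE).2 hj).elim
      bottom_mem := hb
      labelV_of_bottom := fun _ _ hb' _ => hb'.2.elim
      labelE_of_bottom := fun _ _ _ _ hb' _ => hb'.2.elim
      labelV'_choice := fun w v hw hv =>
        (M.labelV'_choice w v hw.1 hv.1).imp (⟨·, trivial⟩) (⟨·, trivial⟩)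
      labelE'_choice := fun w u v hE hw he =>
        (M.labelE'_choice w u v hE hw.1 he.1).imp (⟨·, trivial⟩) (⟨·, trivial⟩)
      labelV'_of_observedV := fun w v s hw ho =>
        ⟨M.labelV'_of_observedV w v s hw.1 ho.1, trivial⟩
      labelE'_of_observedE := fun w u v s hE hw ho =>
        ⟨M.labelE'_of_observedE w u v s hE hw.1 ho.1, trivial⟩
      receive'_of_positive := fun w u v s hE hvw he hl =>
        ⟨M.receive'_of_positive w u v s hE hvw he.1 hl.1, trivial⟩
      receive'_of_negative := fun w u v s t hE hvw hst he hl =>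
        ⟨M.receive'_of_negative w u v s t hE hvw hst he.1 hl.1, trivial⟩
      receive'_of_labelV' := fun w v s hvw hl ha => M.receive'_of_labelV' w v s hvw hl.1 ha.1
      vertex_mem := fun v => ⟨M.vertex_mem v, trivial⟩
      edge_mem := fun u v hE => ⟨M.edge_mem u v hE, trivial⟩
      observedE_mem := fun u v s hE hs => ⟨M.observedE_mem u v s hE hs, trivial⟩
      observedV_mem := fun v s hs => ⟨M.observedV_mem v s hs, trivial⟩
      input_mem := fun v hv => ⟨M.input_mem v hv, trivial⟩ }

theorem not_witnessing : ¬ ∃ σ' μ', Witnessing E σ μ I {v | active v ∈ X} σ' μ' := by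
  rintro ⟨σ', μ', hwit⟩
  have hXY := hX.eq_of_reductModel (fun _ ha => ha.1) (hX.reductModel_respectsLabeling hwit)
  exact (hXY.symm.subset hX.reductModel.bottom_mem).2

/-- The `w`-th primed copy of the labels is unique, and the constraint on `receive'` makes it
witness every active vertex other than `w`. -/
theorem witnessing_sdiff {w : V} (hw : active w ∈ X) :
    ∃ σ' μ', Witnessing E σ μ I ({v | active v ∈ X} \ {w}) σ' μ' := by
  classical
  have M := hX.reductModel
  refine ⟨fun e => (σ e).getD (decide (labelE' w e.1 e.2 true ∈ X)),
    fun v => (μ v).getD (decide (labelV' w v true ∈ X)),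
    fun e s hs => by simp [hs], fun v s hs => by simp [hs], fun v ⟨hv, hvw⟩ _ => ?_⟩
  obtain ⟨s, hs⟩ : ∃ s, labelV' w v s ∈ X :=
    Bool.exists_bool.mpr (M.labelV'_choice w v hw (M.vertexMIC_of_active v hv)).symm
  obtain ⟨u, t, e, hE, he, ht, rfl⟩ :=
    hX.exists_of_receive'_mem (M.receive'_of_labelV' w v s hvw hs hv)
  refine ⟨u, hE, ?_⟩
  dsimp only
  rw [Option.getD_decide_eq_of_unique hs (fun s' h => hX.labelV'_eq h hs)
      (fun b hb => M.labelV'_of_observedV w v b hw (M.observedV_mem v b hb)),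
    Option.getD_decide_eq_of_unique ht (fun t' h => hX.labelV'_eq h ht)
      (fun b hb => M.labelV'_of_observedV w u b hw (M.observedV_mem u b hb)),
    Option.getD_decide_eq_of_unique he (fun e' h => hX.labelE'_eq h he)
      (fun b hb => M.labelE'_of_observedE w u v b hE hw (M.observedE_mem u v b hE hb))]

theorem isMIC : IsMIC E σ μ I {v | active v ∈ X} := by
  refine ⟨hX.not_witnessing, fun W' hW' => ?_⟩
  obtain ⟨w, hw, hwW'⟩ := Set.exists_of_ssubset hW'
  obtain ⟨σ', μ', h⟩ := hX.witnessing_sdiff hw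
  exact ⟨σ', μ', h.mono (Set.subset_sdiff_singleton hW'.1 hwW')⟩

end IsAnswerSet

end Soundness

section Completeness

variable {V : Type} {E : Set (V × V)} {σ : V × V → Option Bool} {μ : V → Option Bool}
  {I W : Set V} {σw : V → V × V → Bool} {μw : V → V → Bool}

variable (E) in
/-- The vertices that the program marks with `vertexMIC` when `W` is active. -/
def IsMICVertex (W : Set V) (v : V) : Prop :=
  v ∈ W ∨ ∃ v', (v, v') ∈ E ∧ v' ∈ W

variable (E σ μ I) in
def micAnswerSet (W : Set V) (σw : V → V × V → Bool) (μw : V → V → Bool) :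
    Set (AtomD V) :=
  {a | match a with
    | vertex _ => True
    | edge u v => (u, v) ∈ E
    | observedE u v s => (u, v) ∈ E ∧ σ (u, v) = some s
    | observedV v s => μ v = some s
    | input v => v ∈ I
    | labelV _ _ => True
    | labelE u v _ => (u, v) ∈ E
    | active v => v ∈ W
    | inactive v => v ∉ W ∧ v ∉ I
    | edgeMIC u v => (u, v) ∈ E ∧ v ∈ W
    | vertexMIC v => IsMICVertex E W v
    | opposite u v => (u, v) ∈ E
    | bottom => True
    | labelV' w v s => w ∈ W ∧ μw w v = s ∧ (IsMICVertex E W v ∨ μ v = some s)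
    | labelE' w u v s =>
        w ∈ W ∧ (u, v) ∈ E ∧ σw w (u, v) = s ∧ (v ∈ W ∨ σ (u, v) = some s)
    | receive' w v s => v ≠ w ∧ ∃ u t e, (u, v) ∈ E ∧
        (w ∈ W ∧ (u, v) ∈ E ∧ σw w (u, v) = e ∧ (v ∈ W ∨ σ (u, v) = some e)) ∧
        (w ∈ W ∧ μw w u = t ∧ (IsMICVertex E W u ∨ μ u = some t)) ∧ s = signMul t e}

theorem reductModel_micAnswerSet (hWI : ∀ v ∈ W, v ∉ I)
    (hwit : ∀ w ∈ W, Witnessing E σ μ I (W \ {w}) (σw w) (μw w)) :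
    ReductModel E σ μ I (micAnswerSet E σ μ I W σw μw) (micAnswerSet E σ μ I W σw μw)
    where
  labelV_of_observedV _ _ _ := trivial
  labelE_of_observedE _ _ _ hE _ := hE
  active_or_inactive v hvI _ := (em (v ∈ W)).imp id (⟨·, hvI⟩)
  edgeMIC_mem _ _ hE _ hv := ⟨hE, hv⟩
  vertexMIC_of_edgeMIC _ v hE he := Or.inr ⟨v, hE, he.2⟩
  vertexMIC_of_active _ hv := Or.inl hv
  labelV_choice _ _ := Or.inl trivial
  labelE_choice _ _ hE _ := Or.inl hE
  opposite_of_negative _ _ _ hE _ _ _ := hE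
  opposite_of_positive _ _ _ _ hE _ _ _ _ := hE
  bottom_of_opposite _ _ _ := trivial
  bottom_mem := trivial
  labelV_of_bottom _ _ _ _ := trivial
  labelE_of_bottom _ _ _ hE _ _ := hE
  labelV'_choice w v hw hv := (Bool.eq_false_or_eq_true (μw w v)).imp
    (⟨hw, ·, Or.inl hv⟩) (⟨hw, ·, Or.inl hv⟩)
  labelE'_choice w u v hE hw he := (Bool.eq_false_or_eq_true (σw w (u, v))).imp
    (⟨hw, hE, ·, Or.inl he.2⟩) (⟨hw, hE, ·, Or.inl he.2⟩)
  labelV'_of_observedV w v s hw ho := ⟨hw, (hwit w hw).2.1 v s ho, Or.inr ho⟩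
  labelE'_of_observedE w u v s hE hw ho := ⟨hw, hE, (hwit w hw).1 (u, v) s ho.2, Or.inr ho.2⟩
  receive'_of_positive w u v s hE hvw he ht :=
    ⟨hvw, u, s, s, hE, he, ht, (signMul_self s).symm⟩
  receive'_of_negative w u v s t hE hvw hst he ht :=
    ⟨hvw, u, t, s, hE, he, ht, (signMul_of_ne (Ne.symm hst)).symm⟩
  receive'_of_labelV' w v s hvw := by
    rintro ⟨hw, rfl, -⟩ hv
    obtain ⟨u, hE, hu⟩ := (hwit w hw).2.2 v ⟨hv, hvw⟩ (hWI v hv)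
    exact ⟨hvw, u, _, _, hE, ⟨hw, hE, rfl, Or.inl hv⟩,
      ⟨hw, rfl, Or.inl (Or.inr ⟨v, hE, hv⟩)⟩, hu⟩
  vertex_mem _ := trivial
  edge_mem _ _ hE := hE
  observedE_mem _ _ _ hE hs := ⟨hE, hs⟩
  observedV_mem _ _ hs := hs
  input_mem _ hv := hv

section Minimality

variable {Y : Set (AtomD V)} (hYX : Y ⊆ micAnswerSet E σ μ I W σw μw)
  (hY : ReductModel E σ μ I (micAnswerSet E σ μ I W σw μw) Y) (hact : ∀ v ∈ W, active v ∈ Y)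
include hY hact

theorem edgeMIC_mem_of_mem_micAnswerSet {u v : V}
    (h : edgeMIC u v ∈ micAnswerSet E σ μ I W σw μw) : edgeMIC u v ∈ Y :=
  hY.edgeMIC_mem u v h.1 (hY.edge_mem u v h.1) (hact v h.2)

theorem vertexMIC_mem_of_mem_micAnswerSet {v : V}
    (h : vertexMIC v ∈ micAnswerSet E σ μ I W σw μw) : vertexMIC v ∈ Y := by
  rcases h with hv | ⟨v', hE, hv'⟩
  · exact hY.vertexMIC_of_active v (hact v hv)
  · exact hY.vertexMIC_of_edgeMIC v v' hE (edgeMIC_mem_of_mem_micAnswerSet hY hact ⟨hE, hv'⟩)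

include hYX

theorem labelV'_mem_of_mem_micAnswerSet {w v : V} {s : Bool}
    (h : labelV' w v s ∈ micAnswerSet E σ μ I W σw μw) : labelV' w v s ∈ Y := by
  obtain ⟨hw, rfl, hv | hobs⟩ := h
  · rcases hY.labelV'_choice w v (hact w hw) (vertexMIC_mem_of_mem_micAnswerSet hY hact hv)
      with h | h <;> rwa [(hYX h).2.1]
  · exact hY.labelV'_of_observedV w v _ (hact w hw) (hY.observedV_mem v _ hobs)

theorem labelE'_mem_of_mem_micAnswerSet {w u v : V} {e : Bool}
    (h : labelE' w u v e ∈ micAnswerSet E σ μ I W σw μw) : labelE' w u v e ∈ Y := by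
  obtain ⟨hw, hE, rfl, hv | hobs⟩ := h
  · rcases hY.labelE'_choice w u v hE (hact w hw) (edgeMIC_mem_of_mem_micAnswerSet hY hact ⟨hE, hv⟩)
      with h | h <;> rwa [(hYX h).2.2.1]
  · exact hY.labelE'_of_observedE w u v _ hE (hact w hw) (hY.observedE_mem u v _ hE hobs)

theorem micAnswerSet_subset_of_bottom_mem (hb : bottom ∈ Y) :
    micAnswerSet E σ μ I W σw μw ⊆ Y := by
  intro a ha
  cases a with
  | vertex v => exact hY.vertex_mem v
  | edge u v => exact hY.edge_mem u v ha
  | observedE u v s => exact hY.observedE_mem u v s ha.1 ha.2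
  | observedV v s => exact hY.observedV_mem v s ha
  | input v => exact hY.input_mem v ha
  | labelV v s => exact hY.labelV_mem_of_bottom_mem hb v s
  | labelE u v s => exact hY.labelE_mem_of_bottom_mem hb ha s
  | active v => exact hact v ha
  | inactive v =>
    exact (hY.active_or_inactive v ha.2 (hY.vertex_mem v)).resolve_left fun h => ha.1 (hYX h)
  | edgeMIC u v => exact edgeMIC_mem_of_mem_micAnswerSet hY hact ha
  | vertexMIC v => exact vertexMIC_mem_of_mem_micAnswerSet hY hact ha
  | opposite u v => exact hY.opposite_mem_of_bottom_mem hb ha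
  | bottom => exact hb
  | labelV' w v s => exact labelV'_mem_of_mem_micAnswerSet hYX hY hact ha
  | labelE' w u v s => exact labelE'_mem_of_mem_micAnswerSet hYX hY hact ha
  | receive' w v s =>
    obtain ⟨hvw, u, t, e, hE, he, ht, rfl⟩ := ha
    exact hY.receive'_signMul_mem hE hvw (labelE'_mem_of_mem_micAnswerSet hYX hY hact he)
      (labelV'_mem_of_mem_micAnswerSet hYX hY hact ht)

end Minimality

/-- A smaller model must still contain `bottom`: otherwise its labels would witness `W`. -/
theorem isAnswerSet_micAnswerSet (hW : IsMIC E σ μ I W)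
    (hwit : ∀ w ∈ W, Witnessing E σ μ I (W \ {w}) (σw w) (μw w)) :
    IsAnswerSet (PD E ∪ tauD E σ μ I) (micAnswerSet E σ μ I W σw μw) := by
  refine ⟨reductModel_iff.mpr (reductModel_micAnswerSet (fun v => hW.not_mem_input) hwit),
    fun Y hYX hY => ?_⟩
  rw [reductModel_iff] at hY
  have hact : ∀ v ∈ W, active v ∈ Y := fun v hv =>
    (hY.active_or_inactive v (hW.not_mem_input hv) (hY.vertex_mem v)).resolve_right
      fun h => (hYX h).1 hv
  have hb : bottom ∈ Y := by
    by_contra hb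
    obtain ⟨σ', μ', h⟩ := hY.witnessing_of_bottom_not_mem hb
    exact hW.1 ⟨σ', μ', h.mono hact⟩
  exact hYX.antisymm (micAnswerSet_subset_of_bottom_mem hYX hY hact hb)

end Completeness

theorem mic_iff_answer_set_general {V : Type}
    (E : Set (V × V)) (σ : V × V → Option Bool) (μ : V → Option Bool) (I : Set V)
    (W : Set V) :
    IsMIC E σ μ I W ↔
      ∃ X : Set (AtomD V), IsAnswerSet (PD E ∪ tauD E σ μ I) X ∧
        {i | AtomD.active i ∈ X} = W := by
  constructor
  · intro hW
    obtain ⟨σw, μw, hwit⟩ := hW.exists_witnessing_sdiff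
    exact ⟨micAnswerSet E σ μ I W σw μw, isAnswerSet_micAnswerSet hW hwit, rfl⟩
  · rintro ⟨X, hX, rfl⟩
    exact hX.isMIC

/-- Soundness and completeness of the MIC-extraction encoding: `W ⊆ V` is a
Minimal Inconsistent Core iff there is an answer set `X` of `P_D ∪ τ((V,E,σ),μ)`
such that `{i | active(i) ∈ X} = W`. -/
theorem mic_iff_answer_set {V : Type} [Fintype V]
    (E : Set (V × V)) (σ : V × V → Option Bool) (μ : V → Option Bool) (I : Set V)
    (hσ : ∀ e, σ e ≠ none → e ∈ E) (W : Set V) :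
    IsMIC E σ μ I W ↔
      ∃ X : Set (AtomD V), IsAnswerSet (PD E ∪ tauD E σ μ I) X ∧
        {i | AtomD.active i ∈ X} = W :=
  mic_iff_answer_set_general E σ μ I W
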